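/- The mask m₀(χ) = (1/p) Σ_{h∈H₀^{(N+1)}} β_h conj((χA^{−1}, h)) is periodic with respect to every character of the form r₁^{α₁} r₂^{α₂} ⋯ r_s^{α_s}: m₀(χ · r₁^{α₁}⋯r_s^{α_s}) = m₀(χ) for all χ ∈ X, s ∈ ℕ, α_j ∈ {0,...,p−1}. -/

import Mathlib

open MeasureTheory Complex
open scoped ENNReal Classical

noncomputable section

/-- The group of (not necessarily continuous) characters of `G`, with values in the circle. -/
abbrev DualG (G : Type*) [AddCommGroup G] := AddChar G Circle

variable {G : Type*} [AddCommGroup G]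

/-- Annihilator of a subgroup `H` in the character group:
`H^⊥ = {χ : χ(x) = 1 for all x ∈ H}`. -/
def ann (H : AddSubgroup G) : Set (DualG G) := {χ : DualG G | ∀ x ∈ H, χ x = 1}

/-- The action of the `n`-th power of the dilation `A` on characters: `(χAⁿ)(x) = χ(Aⁿ x)`. -/
def dilDual (A : AddAut G) (n : ℤ) (χ : DualG G) : DualG G :=
  χ.compAddMonoidHom (n • A : AddAut G).toAddMonoidHom

variable [MeasurableSpace G]

/-- The Fourier transform `f̂(χ) = ∫ f(x) conj(χ(x)) dμ(x)`. -/
def fourierT (μ : Measure G) (f : G → ℂ) (χ : DualG G) : ℂ :=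
  ∫ x, f x * star ((χ x : ℂ)) ∂μ

/-- The set `H₀` of all finite combinations `a₋₁g₋₁ ∔ … ∔ a₋ₛg₋ₛ`, `0 ≤ aⱼ ≤ p-1`,
of the basic elements with negative indices (the analogue of `ℕ`). -/
def H0 (gen : ℤ → G) (p : ℕ) : Set G :=
  {h | ∃ (s : ℕ) (a : ℕ → ℕ), (∀ j, a j < p) ∧
    h = ∑ j ∈ Finset.range s, a j • gen (-(j : ℤ) - 1)}

/-- The set `H₀⁽ˢ⁾` of combinations using only the generators `g₋₁, …, g₋ₛ`. -/
def H0N (gen : ℤ → G) (p s : ℕ) : Set G :=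
  {h | ∃ a : ℕ → ℕ, (∀ j, a j < p) ∧
    h = ∑ j ∈ Finset.range s, a j • gen (-(j : ℤ) - 1)}

/-- `f` is a step function supported in `Gsupp` and constant on cosets of `Gconst`
(the class `𝔇` of the paper: `f ∈ 𝔇_{Gconst}(Gsupp)`). -/
def IsStep (Gsupp Gconst : AddSubgroup G) (f : G → ℂ) : Prop :=
  (∀ x, x ∉ Gsupp → f x = 0) ∧ ∀ x : G, ∀ g ∈ Gconst, f (x + g) = f x

/-- `F` (a function on the dual group) is supported in the annihilator `Hsupp^⊥` and
constant on cosets of the annihilator `Hconst^⊥`. -/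
def IsStepDual (Hsupp Hconst : AddSubgroup G) (F : DualG G → ℂ) : Prop :=
  (∀ χ, χ ∉ ann Hsupp → F χ = 0) ∧
    ∀ χ : DualG G, ∀ η ∈ ann Hconst, F (η * χ) = F χ

/-- The system of shifts of `ψ` by the elements of `H` is orthonormal in `L²(μ)`. -/
def orthShifts (μ : Measure G) (H : Set G) (ψ : G → ℂ) : Prop :=
  ∀ h ∈ H, ∀ g ∈ H, ∫ x, ψ (x - h) * star (ψ (x - g)) ∂μ = if h = g then 1 else 0

/-- The space `Vₙ`: the closed linear span in `L²(μ)` of the shifts of `φ(Aⁿ ·)`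
by the elements of `H`. -/
def Vsp (μ : Measure G) (A : AddAut G) (H : Set G) (φ : G → ℂ) (n : ℤ) :
    Submodule ℂ (Lp ℂ 2 μ) :=
  (Submodule.span ℂ
    {f : Lp ℂ 2 μ | ∃ h ∈ H, ∀ᵐ x ∂μ, f x = φ ((n • A) x - h)}).topologicalClosure

/-- `φ` generates an orthogonal MRA: the spaces `Vₙ` are nested (A1), their union is
dense and their intersection is trivial (A2), and the `H`-shifts of `φ` form an
orthonormal system spanning `V₀` (A5); axioms A3, A4 hold by the definition of `Vₙ`. -/
def GeneratesMRA (μ : Measure G) (A : AddAut G) (H : Set G) (φ : G → ℂ) : Prop :=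
  (∀ n : ℤ, Vsp μ A H φ n ≤ Vsp μ A H φ (n + 1)) ∧
  (⨆ n : ℤ, Vsp μ A H φ n).topologicalClosure = ⊤ ∧
  (⨅ n : ℤ, Vsp μ A H φ n) = ⊥ ∧
  orthShifts μ H φ

/-!
Write `A⁻¹h` for `h = ∑_{j ≤ N} a_j g_{-j-1} ∈ H₀^{(N+1)}`: since `A` shifts the basis down by one,
`A⁻¹h = ∑_{j ≤ N} a_j g_{-j}` involves only generators with non-positive indices. The Rademacher
function `r_n` with `n ≥ 1` is trivial on every `g_k` with `k ≠ n`, hence on `A⁻¹h`, and so is any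
product of powers of `r_1, …, r_s`. Every term of the sum defining `m₀` is therefore unchanged.
-/

open Finset

section Vilenkin

-- A fresh type name keeps the ambient instance `[MeasurableSpace G]` out of these lemmas.
variable {V : Type*} [AddCommGroup V]

lemma AddChar.map_sum_nsmul_eq_one {ι M : Type*} [CommMonoid M] (ψ : AddChar V M)
    (s : Finset ι) (a : ι → ℕ) (g : ι → V) (hψ : ∀ j ∈ s, ψ (g j) = 1) :
    ψ (∑ j ∈ s, a j • g j) = 1 :=
  Finset.sum_induction _ (fun x => ψ x = 1)
    (fun x y hx hy => by rw [ψ.map_add_eq_mul, hx, hy, one_mul]) ψ.map_zero_eq_one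
    fun j hj => by rw [ψ.map_nsmul_eq_pow, hψ j hj, one_pow]

lemma AddChar.prod_pow_apply_eq_one {ι M : Type*} [CommMonoid M] (s : Finset ι)
    (ψ : ι → AddChar V M) (α : ι → ℕ) (x : V) (hψ : ∀ j ∈ s, ψ j x = 1) :
    (∏ j ∈ s, ψ j ^ α j) x = 1 := by
  rw [AddChar.prod_apply]
  exact Finset.prod_eq_one fun j hj => by rw [AddChar.pow_apply, hψ j hj, one_pow]

lemma dilDual_mul (A : AddAut V) (n : ℤ) (χ η : DualG V) :
    dilDual A n (χ * η) = dilDual A n χ * dilDual A n η :=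
  rfl

lemma dilDual_neg_one_apply (A : AddAut V) (χ : DualG V) (x : V) :
    dilDual A (-1) χ x = χ (A.symm x) := by
  simp [dilDual]

variable {gen : ℤ → V}

lemma AddAut.symm_apply_gen {A : AddAut V} (hAgen : ∀ n : ℤ, A (gen n) = gen (n - 1)) (n : ℤ) :
    A.symm (gen n) = gen (n + 1) :=
  A.symm_apply_eq.mpr (by rw [hAgen, add_sub_cancel_right])

lemma AddAut.symm_sum_nsmul_gen {A : AddAut V} (hAgen : ∀ n : ℤ, A (gen n) = gen (n - 1))
    (s : ℕ) (a : ℕ → ℕ) :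
    A.symm (∑ j ∈ range s, a j • gen (-(j : ℤ) - 1)) = ∑ j ∈ range s, a j • gen (-(j : ℤ)) := by
  simp only [map_sum, map_nsmul, AddAut.symm_apply_gen hAgen, sub_add_cancel]

lemma rademacher_apply_gen_of_ne {p : ℕ} {r : ℤ → DualG V}
    (hr : ∀ n k : ℤ, r n (gen k) = Circle.exp (2 * Real.pi * (if n = k then 1 else 0) / p))
    {n k : ℤ} (hnk : n ≠ k) : r n (gen k) = 1 := by
  simp [hr, hnk]

lemma rademacher_apply_symm_H0N {p : ℕ} {A : AddAut V} {r : ℤ → DualG V}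
    (hAgen : ∀ n : ℤ, A (gen n) = gen (n - 1))
    (hr : ∀ n k : ℤ, r n (gen k) = Circle.exp (2 * Real.pi * (if n = k then 1 else 0) / p))
    {n : ℤ} (hn : 0 < n) (s : ℕ) {h : V} (hh : h ∈ H0N gen p s) : r n (A.symm h) = 1 := by
  obtain ⟨a, -, rfl⟩ := hh
  rw [AddAut.symm_sum_nsmul_gen hAgen]
  exact AddChar.map_sum_nsmul_eq_one _ _ _ _ fun j _ =>
    rademacher_apply_gen_of_ne hr (by omega)

end Vilenkin

theorem mask_periodic_general
    {G : Type*} [AddCommGroup G]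
    (p : ℕ)
    (gen : ℤ → G)
    (A : AddAut G)
    (hAgen : ∀ n : ℤ, A (gen n) = gen (n - 1))
    (r : ℤ → DualG G)
    (hr : ∀ n k : ℤ, r n (gen k) =
      Circle.exp (2 * Real.pi * (if n = k then 1 else 0) / p))
    (N : ℕ) (β : G → ℂ) (m0 : DualG G → ℂ)
    (hm0 : ∀ χ : DualG G, m0 χ =
      (1 / (p : ℂ)) * ∑' h : H0N gen p (N + 1),
        β (h : G) * star (((dilDual A (-1) χ) (h : G) : ℂ))) :
    ∀ (χ : DualG G) (s : ℕ) (α : ℕ → ℕ), (∀ j, α j < p) →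
      m0 (χ * ∏ j ∈ Finset.range s, (r ((j : ℤ) + 1)) ^ (α j)) = m0 χ := by
  intro χ s α _
  rw [hm0, hm0]
  congr 1
  refine tsum_congr fun h => ?_
  have hperiod : (∏ j ∈ range s, r ((j : ℤ) + 1) ^ α j) (A.symm h) = 1 :=
    AddChar.prod_pow_apply_eq_one _ _ _ _ fun j _ =>
      rademacher_apply_symm_H0N hAgen hr (by omega) (N + 1) h.2
  rw [dilDual_mul, AddChar.mul_apply, dilDual_neg_one_apply A (∏ j ∈ range s, _), hperiod,
    mul_one]

/-- The mask `m₀(χ) = (1/p) Σ_{h∈H₀^{(N+1)}} β_h conj((χA⁻¹, h))` is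
periodic with every period `r₁^{α₁} r₂^{α₂} ⋯ r_s^{α_s}`. -/
theorem mask_periodic
    {G : Type*} [AddCommGroup G] [TopologicalSpace G] [IsTopologicalAddGroup G]
    [LocallyCompactSpace G] [TotallyDisconnectedSpace G] [MeasurableSpace G]
    (Gsub : ℤ → AddSubgroup G)
    (hchain : ∀ n : ℤ, (Gsub (n + 1) : Set G) ⊆ Gsub n)
    (hcompact : ∀ n : ℤ, IsCompact (Gsub n : Set G))
    (hopen : ∀ n : ℤ, IsOpen (Gsub n : Set G))
    (hunion : (⋃ n : ℤ, (Gsub n : Set G)) = Set.univ)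
    (hinter : (⋂ n : ℤ, (Gsub n : Set G)) = {0})
    (μ : Measure G)
    (hμinv : ∀ (g : G) (s : Set G), μ ((g + ·) '' s) = μ s)
    (p : ℕ) (hp : p.Prime)
    (hindex : ∀ n : ℤ, (Gsub (n + 1)).relIndex (Gsub n) = p)
    (hμnorm : ∀ n : ℤ, μ (Gsub n : Set G) = (p : ℝ≥0∞) ^ (-n))
    (gen : ℤ → G) (hgen : ∀ n : ℤ, gen n ∈ (Gsub n : Set G) \ (Gsub (n + 1) : Set G))
    (A : AddAut G) (hA : ∀ n : ℤ, (A : G → G) '' (Gsub n) = Gsub (n - 1))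
    (hAgen : ∀ n : ℤ, A (gen n) = gen (n - 1))
    (hVil : ∀ n : ℤ, p • gen n = 0)
    (r : ℤ → DualG G)
    (hrmem : ∀ n : ℤ, r n ∈ ann (Gsub (n + 1)) \ ann (Gsub n))
    (hr : ∀ n k : ℤ, r n (gen k) =
      Circle.exp (2 * Real.pi * (if n = k then 1 else 0) / p))
    (N : ℕ) (β : G → ℂ) (m0 : DualG G → ℂ)
    (hm0 : ∀ χ : DualG G, m0 χ =
      (1 / (p : ℂ)) * ∑' h : H0N gen p (N + 1),
        β (h : G) * star (((dilDual A (-1) χ) (h : G) : ℂ))) :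
    ∀ (χ : DualG G) (s : ℕ) (α : ℕ → ℕ), (∀ j, α j < p) →
      m0 (χ * ∏ j ∈ Finset.range s, (r ((j : ℤ) + 1)) ^ (α j)) = m0 χ :=
  mask_periodic_general p gen A hAgen r hr N β m0 hm0
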